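/- Gaussian tail bound for the Neumann Green function on [0,1]: for every t > 0, every X > 0, and every r ∈ [0,1], ∫_{ {r' ∈ [0,1] : |r' − r| > X} } G_t^{neum}(r,r') dr' ≤ √2 · e^{−X²/(4t)}. -/

import Mathlib

open MeasureTheory

noncomputable section

/-- `Ff u r = F(r;u) = ∫_r^1 u(r') dr'` for a density `u : ℝ → ℝ`. -/
def Ff (u : ℝ → ℝ) (r : ℝ) : ℝ := ∫ s in r..1, u s

/-- Elements of `𝒰` are encoded as pairs `(c, ρ)` representing the measure `c·D₀ + ρ(r)dr`
on `[0,1]`.  `Fm u r = F(r; c·D₀ + ρ dr) = c·1_{0 ∈ [r,1]} + ∫_r^1 ρ`. -/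
def Fm (u : ℝ × (ℝ → ℝ)) (r : ℝ) : ℝ :=
  (if r ≤ 0 then u.1 else 0) + Ff u.2 r

/-- The one-dimensional heat kernel `G_t(r,r')`. -/
def heatK (t r r' : ℝ) : ℝ :=
  Real.exp (-((r - r') ^ 2) / (2 * t)) / Real.sqrt (2 * Real.pi * t)

/-- The Green function of the heat equation on `[0,1]` with Neumann boundary conditions,
obtained by summing the heat kernel over the reflected images `2k + r'` and `2k - r'`. -/
def Gneum (t r r' : ℝ) : ℝ :=
  ∑' k : ℤ, (heatK t r (2 * (k : ℝ) + r') + heatK t r (2 * (k : ℝ) - r'))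

/-- `(G_t^{neum} * u)(r)` for `u = c·D₀ + ρ dr ∈ 𝒰`. -/
def Gconv (t : ℝ) (u : ℝ × (ℝ → ℝ)) (r : ℝ) : ℝ :=
  u.1 * Gneum t r 0 + ∫ s in (0:ℝ)..1, Gneum t r s * u.2 s

/-- `R_δ(u) = inf {r : F(r;u) = jδ}`; the parameter `m` stands for the mass `jδ`. -/
def Rdel (m : ℝ) (u : ℝ × (ℝ → ℝ)) : ℝ := sInf {r : ℝ | Fm u r = m}

/-- The cut-and-paste operator `K^{(δ)} u = jδ·D₀ + 1_{[0,R_δ(u)]} u`;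
the parameter `m` stands for `jδ`. -/
def Kop (m : ℝ) (u : ℝ × (ℝ → ℝ)) : ℝ × (ℝ → ℝ) :=
  (m + u.1, fun r => if r ≤ Rdel m u then u.2 r else 0)

/-- The upper barrier `S_{nδ}^{(δ,+)}(u)` (an `L^∞` function for each `n`):
`S₀ = u`, `S_{nδ} = G_δ^{neum} * (K^{(δ)} S_{(n-1)δ})`. -/
def Splus (j δ : ℝ) (u : ℝ → ℝ) : ℕ → ℝ → ℝ
  | 0 => u
  | n + 1 => Gconv δ (Kop (j * δ) (0, Splus j δ u n))

/-- The lower barrier `S_{nδ}^{(δ,−)}(u)` (an element of `𝒰` for each `n`):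
`S₀ = u`, `S_{nδ} = K^{(δ)} (G_δ^{neum} * S_{(n-1)δ})`. -/
def Sminus (j δ : ℝ) (u : ℝ → ℝ) : ℕ → ℝ × (ℝ → ℝ)
  | 0 => (0, u)
  | n + 1 => Kop (j * δ) (0, Gconv δ (Sminus j δ u n))

/-- Total variation `|u − v|₁ = |c_u − c_v| + ∫₀¹ |ρ_u − ρ_v|` of the difference of two
elements of `𝒰`. -/
def tvDist (u v : ℝ × (ℝ → ℝ)) : ℝ :=
  |u.1 - v.1| + ∫ s in (0:ℝ)..1, |u.2 s - v.2 s|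

/-- `u ∈ L^∞([0,1]; ℝ≥0)`: measurable, nonnegative and bounded on `[0,1]`. -/
def IsAdmissible (v : ℝ → ℝ) : Prop :=
  Measurable v ∧ (∀ r ∈ Set.Icc (0:ℝ) 1, 0 ≤ v r) ∧
    ∃ C : ℝ, ∀ r ∈ Set.Icc (0:ℝ) 1, |v r| ≤ C

/-- Membership in `𝒰`: `u = c·D₀ + ρ dr` with `c ≥ 0`, `ρ ∈ L^∞([0,1]; ℝ≥0)`. -/
def InU (u : ℝ × (ℝ → ℝ)) : Prop :=
  0 ≤ u.1 ∧ IsAdmissible u.2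

/-- Membership in `𝒰_δ = {u = c·D₀ + ρ ∈ 𝒰 : F(0;ρ) > jδ}`; `m` stands for `jδ`. -/
def InUdelta (m : ℝ) (u : ℝ × (ℝ → ℝ)) : Prop :=
  InU u ∧ m < Ff u.2 0

/-- The family `(v t)_{t>0}` separates the barriers of `u`:
`S_{kδ}^{(δ,−)}(u) ≤ v (kδ) ≤ S_{kδ}^{(δ,+)}(u)` in the mass-transport order,
for every admissible `δ` and every positive integer `k`. -/
def SeparatesBarriers (j : ℝ) (u : ℝ → ℝ) (v : ℝ → ℝ → ℝ) : Prop :=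
  ∀ δ : ℝ, 0 < δ → j * δ < Ff u 0 → ∀ k : ℕ, 0 < k →
    ∀ r ∈ Set.Icc (0:ℝ) 1,
      Fm (Sminus j δ u k) r ≤ Ff (v ((k : ℝ) * δ)) r ∧
        Ff (v ((k : ℝ) * δ)) r ≤ Ff (Splus j δ u k) r

end

open Set ENNReal

/-!
For `r, r' ∈ [0,1]` every reflected image `2k ± r'` is at least as far from `r` as `r'` is, so on
the tail `|r' - r| > X` each term of `G_t^{neum}(r, r')` satisfies
`G_t(r, y) ≤ √2 e^{-X²/(4t)} G_{2t}(r, y)`, by splitting the exponent `(r-y)²/(2t)` into two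
halves and bounding one of them by `X²/(4t)`. The images of `[0,1]` tile the real line, so the
Neumann sum of `G_{2t}(r, ·)` integrates over `[0,1]` to `∫_ℝ G_{2t}(r, ·) = 1`.
-/

theorem lintegral_eq_tsum_Ioc_add_zsmul {p : ℝ} (hp : 0 < p) (a : ℝ) (f : ℝ → ℝ≥0∞) :
    ∫⁻ y, f y = ∑' n : ℤ, ∫⁻ y in Ioc (a + n • p) (a + (n + 1) • p), f y := by
  rw [← lintegral_iUnion (fun _ => measurableSet_Ioc) (pairwise_disjoint_Ioc_add_zsmul a p),
    iUnion_Ioc_add_zsmul hp, Measure.restrict_univ]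

theorem setLIntegral_Icc_comp_const_add (f : ℝ → ℝ≥0∞) (c a b : ℝ) :
    ∫⁻ x in Icc a b, f (c + x) = ∫⁻ y in Icc (c + a) (c + b), f y := by
  have h := (measurePreserving_add_left volume c).setLIntegral_comp_preimage_emb
    (measurableEmbedding_addLeft c) f (Icc (c + a) (c + b))
  rwa [preimage_const_add_Icc, add_sub_cancel_left, add_sub_cancel_left] at h

theorem setLIntegral_Icc_comp_const_sub (f : ℝ → ℝ≥0∞) (c a b : ℝ) :
    ∫⁻ x in Icc a b, f (c - x) = ∫⁻ y in Icc (c - b) (c - a), f y := by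
  have h := (Measure.measurePreserving_sub_left volume c).setLIntegral_comp_preimage_emb
    (MeasurableEquiv.subLeft c).measurableEmbedding f (Icc (c - b) (c - a))
  convert h using 3
  ext x
  simp only [mem_Icc, mem_preimage]
  constructor <;> rintro ⟨h₁, h₂⟩ <;> constructor <;> linarith

noncomputable def neumannSum (f : ℝ → ℝ≥0∞) (x : ℝ) : ℝ≥0∞ :=
  ∑' k : ℤ, (f (2 * k + x) + f (2 * k - x))

theorem lintegral_Icc_neumannSum {f : ℝ → ℝ≥0∞} (hf : Measurable f) :
    ∫⁻ x in Icc (0 : ℝ) 1, neumannSum f x = ∫⁻ y, f y := by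
  unfold neumannSum
  rw [lintegral_tsum fun k => by fun_prop,
    lintegral_eq_tsum_Ioc_add_zsmul two_pos (-1) f]
  refine tsum_congr fun k => ?_
  have hIoc : Ioc (-1 + k • (2 : ℝ)) (-1 + (k + 1) • 2) =
      Ioc (2 * (k : ℝ) - 1) (2 * k) ∪ Ioc (2 * (k : ℝ)) (2 * k + 1) := by
    rw [Ioc_union_Ioc_eq_Ioc (by linarith) (by linarith)]
    congr 1 <;> push_cast [zsmul_eq_mul] <;> ring
  rw [lintegral_add_left (by fun_prop), setLIntegral_Icc_comp_const_add,
    setLIntegral_Icc_comp_const_sub, hIoc,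
    lintegral_union measurableSet_Ioc (Ioc_disjoint_Ioc_of_le le_rfl),
    setLIntegral_congr Ioc_ae_eq_Icc.symm, setLIntegral_congr Ioc_ae_eq_Icc.symm, add_comm]
  simp only [add_zero, sub_zero]

theorem heatK_nonneg (t r y : ℝ) : 0 ≤ heatK t r y := by
  unfold heatK; positivity

@[fun_prop]
theorem measurable_heatK (t r : ℝ) : Measurable (heatK t r) := by
  unfold heatK; fun_prop

theorem heatK_eq_gaussianPDFReal {t : ℝ} (ht : 0 ≤ t) (r y : ℝ) :
    heatK t r y = ProbabilityTheory.gaussianPDFReal r t.toNNReal y := by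
  rw [heatK, ProbabilityTheory.gaussianPDFReal, Real.coe_toNNReal t ht, sub_sq_comm,
    div_eq_inv_mul]

theorem lintegral_heatK {t : ℝ} (ht : 0 < t) (r : ℝ) :
    ∫⁻ y, ENNReal.ofReal (heatK t r y) = 1 := by
  simp_rw [heatK_eq_gaussianPDFReal ht.le]
  exact ProbabilityTheory.lintegral_gaussianPDFReal_eq_one r (by simpa using ht)

theorem heatK_le_mul_heatK_two_mul {t X r y : ℝ} (ht : 0 < t) (h : X ^ 2 ≤ (r - y) ^ 2) :
    heatK t r y ≤ √2 * Real.exp (-X ^ 2 / (4 * t)) * heatK (2 * t) r y := by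
  have hexp : Real.exp (-(r - y) ^ 2 / (2 * t)) ≤
      Real.exp (-X ^ 2 / (4 * t)) * Real.exp (-(r - y) ^ 2 / (4 * t)) := by
    rw [← Real.exp_add, show -(r - y) ^ 2 / (2 * t) = -(r - y) ^ 2 / (4 * t) + -(r - y) ^ 2 / (4 * t) by ring]
    gcongr
  have hsqrt : √(2 * Real.pi * (2 * t)) = √2 * √(2 * Real.pi * t) := by
    rw [← Real.sqrt_mul zero_le_two]; ring_nf
  calc heatK t r y ≤ Real.exp (-X ^ 2 / (4 * t)) * Real.exp (-(r - y) ^ 2 / (4 * t)) /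
        √(2 * Real.pi * t) := by rw [heatK]; gcongr
    _ = _ := by rw [heatK, hsqrt, show 2 * (2 * t) = 4 * t by ring]; field_simp

theorem sq_sub_le_sq_sub_reflect {r r' : ℝ} (hr : r ∈ Icc (0 : ℝ) 1) (hr' : r' ∈ Icc (0 : ℝ) 1)
    (k : ℤ) : (r' - r) ^ 2 ≤ (r - (2 * k + r')) ^ 2 ∧ (r' - r) ^ 2 ≤ (r - (2 * k - r')) ^ 2 := by
  obtain ⟨hr0, hr1⟩ := hr
  obtain ⟨hr'0, hr'1⟩ := hr'
  obtain hk | rfl | hk : k ≤ -1 ∨ k = 0 ∨ 1 ≤ k := by omega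
  · have hk' : (k : ℝ) ≤ -1 := by exact_mod_cast hk
    constructor <;> nlinarith
  · push_cast
    constructor <;> nlinarith
  · have hk' : (1 : ℝ) ≤ k := by exact_mod_cast hk
    constructor <;> nlinarith

theorem enorm_Gneum_le {t X r r' : ℝ} (ht : 0 < t) (hr : r ∈ Icc (0 : ℝ) 1)
    (hr' : r' ∈ Icc (0 : ℝ) 1) (hX : X ^ 2 ≤ (r' - r) ^ 2) :
    ‖Gneum t r r'‖ₑ ≤ ENNReal.ofReal (√2 * Real.exp (-X ^ 2 / (4 * t))) *
      neumannSum (fun y => ENNReal.ofReal (heatK (2 * t) r y)) r' := by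
  have himage {y : ℝ} (hy : (r' - r) ^ 2 ≤ (r - y) ^ 2) : ‖heatK t r y‖ₑ ≤
      ENNReal.ofReal (√2 * Real.exp (-X ^ 2 / (4 * t))) * ENNReal.ofReal (heatK (2 * t) r y) := by
    rw [Real.enorm_of_nonneg (heatK_nonneg t r y), ← ENNReal.ofReal_mul (by positivity)]
    exact ENNReal.ofReal_le_ofReal (heatK_le_mul_heatK_two_mul ht (hX.trans hy))
  rw [neumannSum, ← ENNReal.tsum_mul_left]
  refine enorm_tsum_le_tsum_enorm.trans (ENNReal.tsum_le_tsum fun k => ?_)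
  obtain ⟨hplus, hminus⟩ := sq_sub_le_sq_sub_reflect hr hr' k
  rw [mul_add]
  exact (enorm_add_le _ _).trans (add_le_add (himage hplus) (himage hminus))

theorem setLIntegral_enorm_Gneum_tail_le {t X : ℝ} (ht : 0 < t) (hX : 0 < X) {r : ℝ}
    (hr : r ∈ Icc (0 : ℝ) 1) :
    ∫⁻ r' in Icc (0 : ℝ) 1 ∩ {r' : ℝ | X < |r' - r|}, ‖Gneum t r r'‖ₑ ≤
      ENNReal.ofReal (√2 * Real.exp (-X ^ 2 / (4 * t))) := by
  have hS : MeasurableSet (Icc (0 : ℝ) 1 ∩ {r' : ℝ | X < |r' - r|}) :=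
    measurableSet_Icc.inter (measurableSet_lt measurable_const (by fun_prop))
  set c := √2 * Real.exp (-X ^ 2 / (4 * t))
  calc
    _ ≤ ∫⁻ r' in Icc (0 : ℝ) 1 ∩ {r' : ℝ | X < |r' - r|},
          ENNReal.ofReal c * neumannSum (fun y => ENNReal.ofReal (heatK (2 * t) r y)) r' :=
      setLIntegral_mono' hS fun r' ⟨hr', hXr'⟩ => enorm_Gneum_le ht hr hr' <| by
        simpa only [sq_abs] using pow_le_pow_left₀ hX.le (le_of_lt hXr') 2
    _ ≤ ∫⁻ r' in Icc (0 : ℝ) 1,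
          ENNReal.ofReal c * neumannSum (fun y => ENNReal.ofReal (heatK (2 * t) r y)) r' :=
      lintegral_mono_set inter_subset_left
    _ = ENNReal.ofReal c := by
      rw [lintegral_const_mul' _ _ ENNReal.ofReal_ne_top,
        lintegral_Icc_neumannSum (by fun_prop), lintegral_heatK (by positivity), mul_one]

/-- Gaussian tail bound for the Neumann Green function on `[0,1]`:
`∫_{r' ∈ [0,1], |r'−r| > X} G_t^{neum}(r,r') dr' ≤ √2 · e^{−X²/(4t)}`. -/
theorem stmt_15 (t X : ℝ) (ht : 0 < t) (hX : 0 < X) (r : ℝ) (hr : r ∈ Set.Icc (0:ℝ) 1) :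
    (∫ r' in Set.Icc (0:ℝ) 1 ∩ {r' : ℝ | X < |r' - r|}, Gneum t r r') ≤
      Real.sqrt 2 * Real.exp (-(X ^ 2) / (4 * t)) := by
  have hnorm := (enorm_integral_le_lintegral_enorm _).trans
    (setLIntegral_enorm_Gneum_tail_le ht hX hr)
  rw [← ofReal_norm, ENNReal.ofReal_le_ofReal_iff (by positivity)] at hnorm
  exact (Real.le_norm_self _).trans hnorm
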